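/- arXiv:2009.06696 — 3 statements merged into one kernel-verified Lean document; each statement's English description precedes it below -/
import Mathlib

section
/- Let P be a locally finite partially ordered set with a weak rank function r, and let κ be a P-kernel in the incidence algebra of P with coefficients in the polynomial ring ℤ[t]. Then there exists a unique element f ∈ 𝓘_{1/2}(P) such that \bar f = κ * f; that is, f x x = 1 for all x, for x < y either f x y = 0 or 2·deg(f x y) < r x y, and for all x ≤ y one has t^{r x y}·(f x y)(t^{-1}) = Σ_{x ≤ z ≤ y} (κ x z)·(f z y). (The element f is the right Kazhdan–Lusztig–Stanley function associated with κ.) -/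
/-!
Splitting off the term `z = x` (where `κ x x = 1`), the equation
`reflect (r x y) (f x y) = ∑_{x ≤ z ≤ y} κ x z * f z y` reads `reflect n p - p = g` with
`p = f x y`, `n = r x y` and `g = ∑_{x < z ≤ y} κ x z * f z y`, which involves `f` only on smaller
intervals. So `f` is determined by recursion on intervals, provided each such equation has exactly
one solution `p` of degree `< n / 2`. Uniqueness holds because a nonzero `p = reflect n p` has
degree at least `n / 2`. For existence, the kernel identity `κ̄ * κ = 1` and the equation on the
smaller intervals make `g` antisymmetric, `reflect n g = -g`, and then
`p = -(the part of g in degrees < n / 2)` is a solution.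
-/

open Finset Polynomial

/-- The bar involution on the incidence algebra of `P` over `ℤ[t]` relative to a weak rank
function `r`: it sends `f` to the function `x y ↦ t^(r x y) · (f x y)(t⁻¹)`, i.e. the
reflection of `f x y` at degree `r x y`. -/
noncomputable def IncidenceAlgebra.bar {P : Type*} [PartialOrder P] [LocallyFiniteOrder P]
    (r : P → P → ℕ) (f : IncidenceAlgebra (Polynomial ℤ) P) :
    IncidenceAlgebra (Polynomial ℤ) P :=
  ⟨fun x y => (f x y).reflect (r x y), fun x y h => by
    show (f x y).reflect (r x y) = 0
    rw [IncidenceAlgebra.apply_eq_zero_of_not_le h, Polynomial.reflect_zero]⟩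

namespace Polynomial

variable {R : Type*}

section Semiring

variable [Semiring R] {n : ℕ}

theorem reflect_sum {ι : Type*} (s : Finset ι) (f : ι → R[X]) (N : ℕ) :
    (∑ i ∈ s, f i).reflect N = ∑ i ∈ s, (f i).reflect N :=
  map_sum (⟨⟨reflect N, reflect_zero⟩, fun f g => reflect_add f g N⟩ : R[X] →+ R[X]) f s

/-- The part of `g` in the degrees `i` with `2 * i < n`. -/
noncomputable def lowerHalf (n : ℕ) (g : R[X]) : R[X] :=
  PowerSeries.trunc ((n + 1) / 2) (g : PowerSeries R)

theorem coeff_lowerHalf (n : ℕ) (g : R[X]) (j : ℕ) :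
    (lowerHalf n g).coeff j = if 2 * j < n then g.coeff j else 0 := by
  rw [lowerHalf, PowerSeries.coeff_trunc, coeff_coe]
  exact if_congr (by omega) rfl rfl

@[simp]
theorem lowerHalf_zero (n : ℕ) : lowerHalf n (0 : R[X]) = 0 := by
  simp [lowerHalf]

theorem two_mul_natDegree_lowerHalf_lt (hn : 0 < n) (g : R[X]) :
    2 * (lowerHalf n g).natDegree < n := by
  by_cases h : lowerHalf n g = 0
  · simpa [h]
  · by_contra hc
    exact leadingCoeff_ne_zero.mpr h (by rw [leadingCoeff, coeff_lowerHalf, if_neg hc])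

theorem eq_zero_of_reflect_eq_self {p : R[X]} (hp : 2 * p.natDegree < n)
    (h : p.reflect n = p) : p = 0 := by
  by_contra hp0
  have hcoeff := congrArg (coeff · (n - p.natDegree)) h
  simp only [coeff_reflect, revAt_le (Nat.sub_le n _), Nat.sub_sub_self (by omega : p.natDegree ≤ n),
    coeff_eq_zero_of_natDegree_lt (by omega : p.natDegree < n - p.natDegree)] at hcoeff
  exact leadingCoeff_ne_zero.mpr hp0 hcoeff

end Semiring

section Ring

variable [Ring R] {n : ℕ}

theorem eq_of_reflect_sub_self_eq {p q : R[X]} (hp : 2 * p.natDegree < n)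
    (hq : 2 * q.natDegree < n) (h : p.reflect n - p = q.reflect n - q) : p = q := by
  rw [← sub_eq_zero]
  have hdeg : 2 * (p - q).natDegree < n := by
    have := natDegree_sub_le p q
    omega
  refine eq_zero_of_reflect_eq_self hdeg ?_
  rw [reflect_sub]
  exact sub_eq_sub_iff_sub_eq_sub.mp h

theorem reflect_lowerHalf [NoZeroDivisors R] [CharZero R] {g : R[X]} (hg : g.natDegree ≤ n)
    (hanti : g.reflect n = -g) : (lowerHalf n g).reflect n = lowerHalf n g - g := by
  ext j
  rw [coeff_reflect, coeff_sub, coeff_lowerHalf]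
  rcases le_or_gt j n with hjn | hnj
  · have hj := congrArg (coeff · j) hanti
    simp only [coeff_reflect, revAt_le hjn, coeff_neg] at hj
    rw [revAt_le hjn, coeff_lowerHalf]
    split_ifs with h₁ h₂ h₂
    · omega
    · rw [hj, zero_sub]
    · rw [sub_self]
    · -- the middle coefficient of an antisymmetric polynomial vanishes
      rw [show n - j = j by omega, CharZero.eq_neg_self_iff] at hj
      rw [hj, sub_zero]
  · rw [revAt_eq_self_of_lt hnj, coeff_lowerHalf, if_neg (by omega),
      coeff_eq_zero_of_natDegree_lt (by omega), sub_zero]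

end Ring

end Polynomial

section KLS

variable {P : Type*} [PartialOrder P]

structure IsWeakRank (r : P → P → ℕ) : Prop where
  pos : ∀ x y, x < y → 0 < r x y
  add : ∀ x y z, x ≤ y → y ≤ z → r x y + r y z = r x z

theorem IsWeakRank.self_eq_zero {r : P → P → ℕ} (hr : IsWeakRank r) (x : P) : r x x = 0 := by
  have := hr.add x x x le_rfl le_rfl
  omega

variable [LocallyFiniteOrder P]

theorem Finset.sum_Ioc_sum_Icc_comm {M : Type*} [AddCommMonoid M] (x y : P) (F : P → P → M) :
    ∑ z ∈ Ioc x y, ∑ w ∈ Icc z y, F z w = ∑ w ∈ Ioc x y, ∑ z ∈ Ioc x w, F z w :=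
  sum_comm' fun z w => by
    simp only [mem_Ioc, mem_Icc]
    constructor
    · rintro ⟨⟨hxz, -⟩, hzw, hwy⟩
      exact ⟨⟨hxz, hzw⟩, hxz.trans_le hzw, hwy⟩
    · rintro ⟨⟨hxz, hzw⟩, -, hwy⟩
      exact ⟨⟨hxz, hzw.trans hwy⟩, hzw, hwy⟩

structure IsPKernel [DecidableEq P] (r : P → P → ℕ) (κ : IncidenceAlgebra ℤ[X] P) : Prop where
  natDegree_le : ∀ x y, x ≤ y → (κ x y).natDegree ≤ r x y
  diag : ∀ x, κ x x = 1
  bar_mul : IncidenceAlgebra.bar r κ * κ = 1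

variable {r : P → P → ℕ} {κ : IncidenceAlgebra ℤ[X] P} {x y : P}

theorem sum_Icc_mul_eq_add_sum_Ioc (hκ : κ x x = 1) (f : P → P → ℤ[X]) (hxy : x ≤ y) :
    ∑ z ∈ Icc x y, κ x z * f z y = f x y + ∑ z ∈ Ioc x y, κ x z * f z y := by
  rw [Icc_eq_cons_Ioc hxy, sum_cons, hκ, one_mul]

theorem natDegree_sum_Ioc_mul_le (hr : IsWeakRank r)
    (hκ : ∀ x y, x ≤ y → (κ x y).natDegree ≤ r x y) {f : P → P → ℤ[X]}
    (hf : ∀ z ∈ Ioc x y, (f z y).natDegree ≤ r z y) :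
    (∑ z ∈ Ioc x y, κ x z * f z y).natDegree ≤ r x y :=
  natDegree_sum_le_of_forall_le _ _ fun z hz => by
    obtain ⟨hxz, hzy⟩ := mem_Ioc.1 hz
    calc (κ x z * f z y).natDegree ≤ (κ x z).natDegree + (f z y).natDegree := natDegree_mul_le
      _ ≤ r x z + r z y := add_le_add (hκ x z hxz.le) (hf z hz)
      _ = r x y := hr.add x z y hxz.le hzy

section DecidableEq

variable [DecidableEq P]

theorem IsPKernel.sum_Ioc_reflect_mul (hr : IsWeakRank r) (hκ : IsPKernel r κ) {w : P}
    (hxw : x < w) : ∑ z ∈ Ioc x w, (κ x z).reflect (r x z) * κ z w = -κ x w := by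
  have h := congrArg (fun f : IncidenceAlgebra ℤ[X] P => f x w) hκ.bar_mul
  have hbar : IncidenceAlgebra.bar r κ x x = 1 := by
    change (κ x x).reflect (r x x) = 1
    rw [hκ.diag, hr.self_eq_zero, reflect_one, pow_zero]
  simp only [IncidenceAlgebra.mul_apply, IncidenceAlgebra.one_apply, if_neg hxw.ne,
    Icc_eq_cons_Ioc hxw.le, sum_cons, hbar, one_mul] at h
  exact eq_neg_of_add_eq_zero_right h

theorem IsPKernel.reflect_sum_Ioc_mul (hr : IsWeakRank r) (hκ : IsPKernel r κ)
    {f : P → P → ℤ[X]} (hf_deg : ∀ z ∈ Ioc x y, (f z y).natDegree ≤ r z y)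
    (hf : ∀ z ∈ Ioc x y, (f z y).reflect (r z y) = ∑ w ∈ Icc z y, κ z w * f w y) :
    (∑ z ∈ Ioc x y, κ x z * f z y).reflect (r x y) = -∑ z ∈ Ioc x y, κ x z * f z y := by
  have hterm : ∀ z ∈ Ioc x y, (κ x z * f z y).reflect (r x y) =
      ∑ w ∈ Icc z y, (κ x z).reflect (r x z) * (κ z w * f w y) := by
    intro z hz
    obtain ⟨hxz, hzy⟩ := mem_Ioc.1 hz
    rw [← hr.add x z y hxz.le hzy, reflect_mul _ _ (hκ.natDegree_le x z hxz.le) (hf_deg z hz),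
      hf z hz, mul_sum]
  calc (∑ z ∈ Ioc x y, κ x z * f z y).reflect (r x y)
      = ∑ z ∈ Ioc x y, ∑ w ∈ Icc z y, (κ x z).reflect (r x z) * (κ z w * f w y) := by
        rw [reflect_sum]
        exact sum_congr rfl hterm
    _ = ∑ w ∈ Ioc x y, (∑ z ∈ Ioc x w, (κ x z).reflect (r x z) * κ z w) * f w y := by
        simp only [sum_Ioc_sum_Icc_comm, sum_mul, mul_assoc]
    _ = -∑ w ∈ Ioc x y, κ x w * f w y := by
        rw [← sum_neg_distrib]
        refine sum_congr rfl fun w hw => ?_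
        rw [hκ.sum_Ioc_reflect_mul hr (mem_Ioc.1 hw).1, neg_mul]

variable (r κ) in
noncomputable def rightKLS : P → P → ℤ[X]
  | x, y =>
    if x = y then 1
    else -lowerHalf (r x y) (∑ z ∈ (Ioc x y).attach,
      have : (Icc z.1 y).card < (Icc x y).card := by
        obtain ⟨hxz, hzy⟩ := mem_Ioc.1 z.2
        exact card_lt_card (Icc_ssubset_Icc_left (hxz.le.trans hzy) hxz le_rfl)
      κ x z * rightKLS z y)
termination_by x y => (Icc x y).card

theorem rightKLS_self (x : P) : rightKLS r κ x x = 1 := by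
  rw [rightKLS, if_pos rfl]

theorem rightKLS_of_ne (hxy : x ≠ y) :
    rightKLS r κ x y = -lowerHalf (r x y) (∑ z ∈ Ioc x y, κ x z * rightKLS r κ z y) := by
  rw [rightKLS, if_neg hxy, sum_attach (Ioc x y) fun z => κ x z * rightKLS r κ z y]

theorem rightKLS_eq_zero_of_not_le (h : ¬x ≤ y) : rightKLS r κ x y = 0 := by
  rw [rightKLS_of_ne (fun hxy => h hxy.le), Ioc_eq_empty fun hxy => h hxy.le, sum_empty,
    lowerHalf_zero, neg_zero]

theorem two_mul_natDegree_rightKLS_lt (hr : IsWeakRank r) (hxy : x < y) :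
    2 * (rightKLS r κ x y).natDegree < r x y := by
  rw [rightKLS_of_ne hxy.ne, natDegree_neg]
  exact two_mul_natDegree_lowerHalf_lt (hr.pos x y hxy) _

theorem natDegree_rightKLS_le (hr : IsWeakRank r) (hxy : x ≤ y) :
    (rightKLS r κ x y).natDegree ≤ r x y := by
  rcases hxy.eq_or_lt with rfl | hlt
  · simp [rightKLS_self]
  · have := two_mul_natDegree_rightKLS_lt (κ := κ) hr hlt
    omega

theorem reflect_rightKLS (hr : IsWeakRank r) (hκ : IsPKernel r κ) (hxy : x ≤ y) :
    (rightKLS r κ x y).reflect (r x y) = ∑ z ∈ Icc x y, κ x z * rightKLS r κ z y := by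
  induction x, y using rightKLS.induct with
  | case1 x => simp [rightKLS_self, hκ.diag, hr.self_eq_zero]
  | case2 x y hne ih =>
    have hf_deg : ∀ z ∈ Ioc x y, (rightKLS r κ z y).natDegree ≤ r z y :=
      fun z hz => natDegree_rightKLS_le hr (mem_Ioc.1 hz).2
    have hanti := hκ.reflect_sum_Ioc_mul hr hf_deg fun z hz => ih ⟨z, hz⟩ (mem_Ioc.1 hz).2
    rw [sum_Icc_mul_eq_add_sum_Ioc (hκ.diag x) _ hxy, rightKLS_of_ne hne, reflect_neg,
      reflect_lowerHalf (natDegree_sum_Ioc_mul_le hr hκ.natDegree_le hf_deg) hanti]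
    abel

theorem eq_rightKLS (hr : IsWeakRank r) (hκ : IsPKernel r κ) {f : P → P → ℤ[X]}
    (hf_diag : ∀ x, f x x = 1)
    (hf_half : ∀ x y, x < y → f x y = 0 ∨ 2 * (f x y).natDegree < r x y)
    (hf : ∀ x y, x ≤ y → (f x y).reflect (r x y) = ∑ z ∈ Icc x y, κ x z * f z y)
    (hxy : x ≤ y) : f x y = rightKLS r κ x y := by
  induction x, y using rightKLS.induct with
  | case1 x => rw [hf_diag, rightKLS_self]
  | case2 x y hne ih =>
    have hlt := lt_of_le_of_ne hxy hne
    have hsum : ∑ z ∈ Ioc x y, κ x z * f z y = ∑ z ∈ Ioc x y, κ x z * rightKLS r κ z y :=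
      sum_congr rfl fun z hz => by rw [ih ⟨z, hz⟩ (mem_Ioc.1 hz).2]
    refine eq_of_reflect_sub_self_eq ?_ (two_mul_natDegree_rightKLS_lt hr hlt) ?_
    · rcases hf_half x y hlt with h | h
      · simpa [h] using hr.pos x y hlt
      · exact h
    · rw [hf x y hxy, reflect_rightKLS hr hκ hxy, sum_Icc_mul_eq_add_sum_Ioc (hκ.diag x) _ hxy,
        sum_Icc_mul_eq_add_sum_Ioc (hκ.diag x) _ hxy, hsum, add_sub_cancel_left,
        add_sub_cancel_left]

end DecidableEq

end KLS

/-- Given a locally finite poset `P` with a weak rank function `r` and a `P`-kernel `κ` in the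
incidence algebra of `P` over `ℤ[t]`, there is a unique `f ∈ 𝓘_{1/2}(P)` with `f̄ = κ * f`:
the right Kazhdan–Lusztig–Stanley function associated with `κ`. -/
theorem existsUnique_right_KLS_function {P : Type*} [PartialOrder P] [LocallyFiniteOrder P]
    [DecidableEq P] (r : P → P → ℕ)
    (hr_pos : ∀ x y : P, x < y → 0 < r x y)
    (hr_add : ∀ x y z : P, x ≤ y → y ≤ z → r x y + r y z = r x z)
    (κ : IncidenceAlgebra (Polynomial ℤ) P)
    (hκ_deg : ∀ x y : P, x ≤ y → (κ x y).natDegree ≤ r x y)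
    (hκ_diag : ∀ x : P, κ x x = 1)
    (hκ_kernel : IncidenceAlgebra.bar r κ * κ = 1) :
    ∃! f : IncidenceAlgebra (Polynomial ℤ) P,
      (∀ x : P, f x x = 1) ∧
      (∀ x y : P, x < y → f x y = 0 ∨ 2 * (f x y).natDegree < r x y) ∧
      ∀ x y : P, x ≤ y →
        (f x y).reflect (r x y) = ∑ z ∈ Finset.Icc x y, κ x z * f z y := by
  have hr : IsWeakRank r := ⟨hr_pos, hr_add⟩
  have hκ : IsPKernel r κ := ⟨hκ_deg, hκ_diag, hκ_kernel⟩
  refine ⟨⟨rightKLS r κ, fun _ _ => rightKLS_eq_zero_of_not_le⟩,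
    ⟨rightKLS_self, fun _ _ hxy => Or.inr (two_mul_natDegree_rightKLS_lt hr hxy),
      fun _ _ => reflect_rightKLS hr hκ⟩, ?_⟩
  rintro f ⟨hf_diag, hf_half, hf⟩
  exact IncidenceAlgebra.ext fun x y hxy => eq_rightKLS hr hκ hf_diag hf_half hf hxy
end

section
/- Let k be a field, G a finite group, and E a k-vector space equipped with a representation ρ of G. Let S be a finite set with a G-action, and let (E_s)_{s ∈ S} be a family of k-subspaces of E forming an internal direct sum decomposition E = ⊕_{s ∈ S} E_s such that ρ(γ) maps E_s onto E_{γ·s} for every γ ∈ G and s ∈ S. For each s ∈ S, E_s is then a module over the group algebra k[G_s], where G_s = Stab_G(s) is the stabilizer of s. Then for any set T ⊆ S containing exactly one representative from each G-orbit of S, there is an isomorphism of k[G]-modules E ≅ ⊕_{s ∈ T} (k[G] ⊗_{k[G_s]} E_s), where k[G] ⊗_{k[G_s]} E_s is the representation of G induced from the G_s-representation E_s. -/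
/-!
The map `⨁_{t ∈ T} k[G] ⊗_{k[G_t]} E_t → E`, `x ⊗ v ↦ x • v`, is `k[G]`-linear. Its inverse is
assembled from the decomposition `E = ⨁_s E_s`: for `v ∈ E_s` pick `g` with `g • s = t ∈ T` and
send `v` to `g⁻¹ ⊗ g v` in the `t`-summand. Two choices of `g` differ by an element of the
stabilizer `G_t`, which is exactly what the relations of the induced module identify.
-/

open TensorProduct MulAction DirectSum

/-- The action of a group element `γ : G` as a `k`-linear endomorphism of a module `E` over
the group algebra `k[G]` (equivalently, of a representation of `G` over `k`). -/
noncomputable def groupSmulLinearMap (k G E : Type*) [CommSemiring k] [Group G]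
    [AddCommMonoid E] [Module k E] [Module (MonoidAlgebra k G) E]
    [IsScalarTower k (MonoidAlgebra k G) E] (γ : G) : E →ₗ[k] E where
  toFun v := (MonoidAlgebra.of k G γ : MonoidAlgebra k G) • v
  map_add' u v := smul_add _ u v
  map_smul' a v := (smul_comm a (MonoidAlgebra.of k G γ : MonoidAlgebra k G) v).symm

/-- The `k[G]`-submodule of relations defining the induced module
`k[G] ⊗_{k[G_s]} E_s`: it is spanned by the elements `h ⊗ v - 1 ⊗ (h • v)` for
`h` in the stabilizer `G_s` of `s` and `v ∈ E_s` (here `w = h • v` is the element of `E_s`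
to which `h` sends `v`). -/
noncomputable def inducedRelations (k G E : Type*) [CommRing k] [Group G]
    [AddCommGroup E] [Module k E] [Module (MonoidAlgebra k G) E]
    [IsScalarTower k (MonoidAlgebra k G) E] {S : Type*} [MulAction G S]
    (Esub : S → Submodule k E) (s : S) :
    Submodule (MonoidAlgebra k G) (MonoidAlgebra k G ⊗[k] (Esub s)) :=
  Submodule.span (MonoidAlgebra k G)
    { x | ∃ (h : stabilizer G s) (v w : Esub s),
        (MonoidAlgebra.of k G (h : G) : MonoidAlgebra k G) • (v : E) = (w : E) ∧
        x = (MonoidAlgebra.of k G (h : G) : MonoidAlgebra k G) ⊗ₜ[k] v - (1 : MonoidAlgebra k G) ⊗ₜ[k] w }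

/-- The induced `k[G]`-module `k[G] ⊗_{k[G_s]} E_s` of the `G_s`-subrepresentation `E_s`,
realized as the quotient of `k[G] ⊗_k E_s` by the relations `x·h ⊗ v = x ⊗ (h • v)` for
`h ∈ G_s`. -/
noncomputable abbrev inducedModule (k G E : Type*) [CommRing k] [Group G]
    [AddCommGroup E] [Module k E] [Module (MonoidAlgebra k G) E]
    [IsScalarTower k (MonoidAlgebra k G) E] {S : Type*} [MulAction G S]
    (Esub : S → Submodule k E) (s : S) :=
  (MonoidAlgebra k G ⊗[k] (Esub s)) ⧸ inducedRelations k G E Esub s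

section

variable {k G E : Type*} [CommRing k] [Group G] [AddCommGroup E] [Module k E]
  [Module (MonoidAlgebra k G) E] [IsScalarTower k (MonoidAlgebra k G) E]
  {S : Type*} [MulAction G S] (Esub : S → Submodule k E)

namespace inducedModule

noncomputable def lift (s : S) : inducedModule k G E Esub s →ₗ[MonoidAlgebra k G] E :=
  (inducedRelations k G E Esub s).liftQ
    (AlgebraTensorModule.lift
      { toFun := fun x => x • (Esub s).subtype
        map_add' := fun x y => add_smul x y _
        map_smul' := fun a x => mul_smul a x _ })
    (by
      rw [inducedRelations, Submodule.span_le]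
      rintro _ ⟨h, v, w, hw, rfl⟩
      rw [SetLike.mem_coe, LinearMap.mem_ker, map_sub]
      change (MonoidAlgebra.of k G h : MonoidAlgebra k G) • (v : E) -
        (1 : MonoidAlgebra k G) • (w : E) = 0
      rw [one_smul, hw, sub_self])

@[simp]
theorem lift_mk_tmul (s : S) (x : MonoidAlgebra k G) (v : Esub s) :
    lift Esub s (Submodule.Quotient.mk (x ⊗ₜ v)) = x • (v : E) :=
  rfl

theorem mk_mul_of_tmul {s : S} (x : MonoidAlgebra k G) {h : G} (hs : h ∈ stabilizer G s)
    {v w : Esub s} (hw : MonoidAlgebra.of k G h • (v : E) = w) :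
    (Submodule.Quotient.mk ((x * MonoidAlgebra.of k G h) ⊗ₜ v) : inducedModule k G E Esub s) =
      Submodule.Quotient.mk (x ⊗ₜ w) := by
  have hrel : MonoidAlgebra.of k G h ⊗ₜ[k] v - (1 : MonoidAlgebra k G) ⊗ₜ[k] w ∈
      inducedRelations k G E Esub s :=
    Submodule.subset_span ⟨⟨h, hs⟩, v, w, hw, rfl⟩
  rw [Submodule.Quotient.eq]
  simpa [smul_sub, smul_tmul'] using Submodule.smul_mem _ x hrel

theorem linearMap_ext {M : Type*} [AddCommMonoid M] [Module k M] {s : S}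
    ⦃f f' : inducedModule k G E Esub s →ₗ[k] M⦄
    (h : ∀ (γ : G) (v : Esub s), f (Submodule.Quotient.mk (MonoidAlgebra.of k G γ ⊗ₜ v)) =
      f' (Submodule.Quotient.mk (MonoidAlgebra.of k G γ ⊗ₜ v))) :
    f = f' := by
  have hmk : f ∘ₗ (inducedRelations k G E Esub s).mkQ.restrictScalars k =
      f' ∘ₗ (inducedRelations k G E Esub s).mkQ.restrictScalars k := by
    refine TensorProduct.ext' fun x v => ?_
    induction x using MonoidAlgebra.induction_on with
    | of γ => exact h γ v
    | add x y hx hy => simpa [add_tmul] using congrArg₂ (· + ·) hx hy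
    | smul r x hx => simpa [← smul_tmul'] using congrArg (r • ·) hx
  refine LinearMap.ext fun z => ?_
  obtain ⟨y, rfl⟩ := Submodule.mkQ_surjective _ z
  exact LinearMap.congr_fun hmk y

end inducedModule

variable {Esub}

theorem exists_transversal_smul {T : Set S} (hT : ∀ s : S, ∃! t : S, t ∈ T ∧ t ∈ orbit G s) :
    ∃ (τ : S → T) (g : S → G), (∀ s, g s • s = τ s) ∧ ∀ (t : T) (γ : G), τ (γ • (t : S)) = t := by
  choose τ hτ hτ_unique using hT
  choose g hg using fun s => (hτ s).2
  refine ⟨fun s => ⟨τ s, (hτ s).1⟩, g, hg, fun t γ => Subtype.ext ?_⟩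
  exact (hτ_unique (γ • (t : S)) t ⟨t.2, γ⁻¹, inv_smul_smul γ (t : S)⟩).symm

section InverseMap

variable (hmap : ∀ (γ : G) (s : S), (Esub s).map (groupSmulLinearMap k G E γ) ≤ Esub (γ • s))

noncomputable def groupSmulRestrict (γ : G) {s t : S} (h : γ • s = t) : Esub s →ₗ[k] Esub t :=
  (groupSmulLinearMap k G E γ).restrict fun _ hv => h ▸ hmap γ s (Submodule.mem_map_of_mem hv)

@[simp]
theorem coe_groupSmulRestrict (γ : G) {s t : S} (h : γ • s = t) (v : Esub s) :
    (groupSmulRestrict hmap γ h v : E) = MonoidAlgebra.of k G γ • (v : E) :=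
  rfl

variable [DecidableEq S]

variable (G Esub) in
noncomputable def inducedSumToModule (T : Set S) :
    (⨁ t : T, inducedModule k G E Esub (t : S)) →ₗ[MonoidAlgebra k G] E :=
  toModule _ _ _ fun t => inducedModule.lift Esub (t : S)

theorem inducedSumToModule_lof {T : Set S} (t : T) (z : inducedModule k G E Esub (t : S)) :
    inducedSumToModule G Esub T (lof k T (fun t : T => inducedModule k G E Esub (t : S)) t z) =
      inducedModule.lift Esub (t : S) z := by
  rw [lof_eq_of, ← lof_eq_of (MonoidAlgebra k G), inducedSumToModule, toModule_lof]

variable {T : Set S} (τ : S → T) (g : S → G) (hg : ∀ s, g s • s = τ s)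

noncomputable def toInducedSummand (s : S) :
    Esub s →ₗ[k] ⨁ t : T, inducedModule k G E Esub (t : S) :=
  lof k T (fun t : T => inducedModule k G E Esub (t : S)) (τ s) ∘ₗ
    (inducedRelations k G E Esub (τ s)).mkQ.restrictScalars k ∘ₗ
    TensorProduct.mk k (MonoidAlgebra k G) _ (MonoidAlgebra.of k G (g s)⁻¹) ∘ₗ
    groupSmulRestrict hmap (g s) (hg s)

theorem inducedSumToModule_toInducedSummand (s : S) (v : Esub s) :
    inducedSumToModule G Esub T (toInducedSummand hmap τ g hg s v) = v := by
  rw [toInducedSummand, LinearMap.comp_apply, inducedSumToModule_lof]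
  change inducedModule.lift Esub _ (Submodule.Quotient.mk (_ ⊗ₜ _)) = _
  rw [inducedModule.lift_mk_tmul, coe_groupSmulRestrict, ← mul_smul, ← map_mul, inv_mul_cancel,
    map_one, one_smul]

theorem toInducedSummand_groupSmulRestrict (hτ : ∀ (t : T) (γ : G), τ (γ • (t : S)) = t)
    (t : T) (γ : G) {s : S} (hs : γ • (t : S) = s) (v : Esub t) :
    toInducedSummand hmap τ g hg s (groupSmulRestrict hmap γ hs v) =
      lof k T (fun t : T => inducedModule k G E Esub (t : S)) t
        (Submodule.Quotient.mk (MonoidAlgebra.of k G γ ⊗ₜ v)) := by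
  obtain rfl : τ s = t := hs ▸ hτ t γ
  have hstab : g s * γ ∈ stabilizer G (τ s : S) := by
    rw [mem_stabilizer_iff, mul_smul, hs, hg s]
  have hgw : MonoidAlgebra.of k G (g s * γ) • (v : E) =
      groupSmulRestrict hmap (g s) (hg s) (groupSmulRestrict hmap γ hs v) := by
    rw [coe_groupSmulRestrict, coe_groupSmulRestrict, map_mul, mul_smul]
  have hγ : MonoidAlgebra.of k G γ =
      MonoidAlgebra.of k G (g s)⁻¹ * MonoidAlgebra.of k G (g s * γ) := by
    rw [← map_mul, inv_mul_cancel_left]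
  rw [hγ, inducedModule.mk_mul_of_tmul Esub _ hstab hgw]
  rfl

end InverseMap

theorem inducedSumToModule_bijective [DecidableEq S]
    (hmap : ∀ (γ : G) (s : S), (Esub s).map (groupSmulLinearMap k G E γ) ≤ Esub (γ • s))
    (hInternal : IsInternal Esub) {T : Set S} (hT : ∀ s : S, ∃! t : S, t ∈ T ∧ t ∈ orbit G s) :
    Function.Bijective (inducedSumToModule G Esub T) := by
  obtain ⟨τ, g, hg, hτ⟩ := exists_transversal_smul hT
  set Φ := inducedSumToModule G Esub T
  set D := LinearEquiv.ofBijective (coeLinearMap Esub) hInternal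
  set Ψ := toModule k S _ (toInducedSummand hmap τ g hg)
  have hD : ∀ (s : S) (v : Esub s), D.symm v = lof k S (fun s => Esub s) s v := fun s v =>
    D.symm_apply_eq.2 (coeLinearMap_of Esub s v).symm
  have hΦΨ : Φ.restrictScalars k ∘ₗ Ψ = coeLinearMap Esub := by
    refine linearMap_ext k fun s => LinearMap.ext fun v => ?_
    rw [LinearMap.comp_apply, LinearMap.comp_apply, LinearMap.restrictScalars_apply, toModule_lof,
      inducedSumToModule_toInducedSummand, LinearMap.comp_apply, lof_eq_of, coeLinearMap_of]
  have hΨΦ : Ψ ∘ₗ D.symm.toLinearMap ∘ₗ Φ.restrictScalars k = LinearMap.id := by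
    refine linearMap_ext k fun t => inducedModule.linearMap_ext Esub fun γ v => ?_
    simp only [Φ, LinearMap.comp_apply, LinearMap.restrictScalars_apply, LinearEquiv.coe_coe,
      LinearMap.id_apply, inducedSumToModule_lof, inducedModule.lift_mk_tmul]
    rw [← coe_groupSmulRestrict hmap γ rfl v, hD, toModule_lof,
      toInducedSummand_groupSmulRestrict hmap τ g hg hτ]
  refine ⟨Function.LeftInverse.injective (g := Ψ ∘ D.symm) fun x => ?_,
    Function.RightInverse.surjective (g := Ψ ∘ D.symm) fun e => ?_⟩
  · exact LinearMap.congr_fun hΨΦ x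
  · exact (LinearMap.congr_fun hΦΨ (D.symm e)).trans (D.apply_symm_apply e)

end

theorem directSum_inducedModule_equiv_general
    (k : Type*) [Field k] (G : Type*) [Group G]
    (E : Type*) [AddCommGroup E] [Module k E] [Module (MonoidAlgebra k G) E]
    [IsScalarTower k (MonoidAlgebra k G) E]
    (S : Type*) [DecidableEq S] [MulAction G S]
    (Esub : S → Submodule k E)
    (hInternal : DirectSum.IsInternal Esub)
    (hmap : ∀ (γ : G) (s : S), (Esub s).map (groupSmulLinearMap k G E γ) = Esub (γ • s))
    (T : Set S) (hT : ∀ s : S, ∃! t : S, t ∈ T ∧ t ∈ MulAction.orbit G s) :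
    Nonempty (E ≃ₗ[MonoidAlgebra k G] ⨁ t : T, inducedModule k G E Esub (t : S)) :=
  ⟨(LinearEquiv.ofBijective _
    (inducedSumToModule_bijective (fun γ s => (hmap γ s).le) hInternal hT)).symm⟩

/-- Let `k` be a field, `G` a finite group, and `E` a representation of `G` over `k`
(that is, a module over the group algebra `k[G]`).  Suppose `E = ⊕_{s ∈ S} E_s` is an
internal direct sum decomposition indexed by a finite `G`-set `S`, such that the action of
`γ ∈ G` maps `E_s` onto `E_{γ • s}`.  Then, for any set `T ⊆ S` containing exactly one
representative of each `G`-orbit, `E` is isomorphic as a `k[G]`-module to the direct sum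
over `s ∈ T` of the representations `k[G] ⊗_{k[G_s]} E_s` induced from the stabilizers. -/
theorem directSum_inducedModule_equiv
    (k : Type*) [Field k] (G : Type*) [Group G] [Fintype G]
    (E : Type*) [AddCommGroup E] [Module k E] [Module (MonoidAlgebra k G) E]
    [IsScalarTower k (MonoidAlgebra k G) E]
    (S : Type*) [Fintype S] [DecidableEq S] [MulAction G S]
    (Esub : S → Submodule k E)
    (hInternal : DirectSum.IsInternal Esub)
    (hmap : ∀ (γ : G) (s : S), (Esub s).map (groupSmulLinearMap k G E γ) = Esub (γ • s))
    (T : Set S) (hT : ∀ s : S, ∃! t : S, t ∈ T ∧ t ∈ MulAction.orbit G s) :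
    Nonempty (E ≃ₗ[MonoidAlgebra k G] ⨁ t : T, inducedModule k G E Esub (t : S)) :=
  directSum_inducedModule_equiv_general k G E S Esub hInternal hmap T hT
end

section
/- Let N be a natural number and let Q ∈ ℤ[t] be a polynomial with deg Q ≤ N satisfying t^N·Q(t^{-1}) = -Q(t), i.e., Polynomial.reflect N Q = -Q. Then there exists a unique polynomial p ∈ ℤ[t] such that either p = 0 or 2·deg p < N, and Polynomial.reflect N p - p = Q. -/
/-- Given `N : ℕ` and an anti-palindromic polynomial `Q ∈ ℤ[t]` of degree at most `N`
(i.e. `t^N · Q(t⁻¹) = -Q(t)`), there is a unique polynomial `p` with `p = 0` or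
`2 · deg p < N` such that `t^N · p(t⁻¹) - p(t) = Q(t)`. -/
theorem existsUnique_half_degree_of_antipalindromic (N : ℕ) (Q : Polynomial ℤ)
    (hdeg : Q.natDegree ≤ N) (hQ : Q.reflect N = -Q) :
    ∃! p : Polynomial ℤ,
      (p = 0 ∨ 2 * p.natDegree < N) ∧ p.reflect N - p = Q := by
  -- coefficient form of anti-palindromicity
  have hQc : ∀ i, Q.coeff (Polynomial.revAt N i) = -Q.coeff i := by
    intro i
    have := congrArg (fun f => Polynomial.coeff f i) hQ
    simpa [Polynomial.coeff_reflect] using this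
  set M := (N + 1) / 2 with hM
  set p : Polynomial ℤ := ∑ i ∈ Finset.range M, Polynomial.monomial i (-(Q.coeff i))
    with hpdef
  have hp : ∀ j, p.coeff j = if 2 * j < N then -(Q.coeff j) else 0 := by
    intro j
    rw [hpdef, Polynomial.finset_sum_coeff]
    simp only [Polynomial.coeff_monomial]
    simp only [Finset.sum_ite_eq', Finset.mem_range]
    by_cases h : j < M
    · rw [if_pos h, if_pos (by omega)]
    · rw [if_neg h, if_neg (by omega)]
  refine ⟨p, ⟨?_, ?_⟩, ?_⟩
  · -- degree condition
    by_cases hp0 : p = 0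
    · exact Or.inl hp0
    · right
      have hd : p.coeff p.natDegree ≠ 0 := Polynomial.coeff_ne_zero_of_eq_degree
        (Polynomial.degree_eq_natDegree hp0)
      rw [hp] at hd
      by_cases h : 2 * p.natDegree < N
      · exact h
      · exact absurd (if_neg h) hd
  · -- reflect N p - p = Q
    ext i
    rw [Polynomial.coeff_sub, Polynomial.coeff_reflect, hp, hp]
    by_cases hiN : i ≤ N
    · rw [Polynomial.revAt_le hiN]
      rcases lt_trichotomy (2 * i) N with h | h | h
      · rw [if_neg (by omega), if_pos h]; ring
      · rw [if_neg (by omega), if_neg (by omega)]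
        have h2 := hQc i
        rw [Polynomial.revAt_le hiN] at h2
        have hNi : N - i = i := by omega
        rw [hNi] at h2
        omega
      · rw [if_pos (by omega), if_neg (by omega)]
        have h2 := hQc i
        rw [Polynomial.revAt_le hiN] at h2
        omega
    · rw [Polynomial.revAt_eq_self_of_lt (by omega)]
      rw [if_neg (show ¬ 2 * i < N by omega)]
      have h0 : Q.coeff i = 0 := Polynomial.coeff_eq_zero_of_natDegree_lt (by omega)
      omega
  · -- uniqueness
    intro q ⟨hq1, hq2⟩
    have hqz : ∀ i, ¬ (2 * i < N) → q.coeff i = 0 := by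
      intro i hi
      rcases hq1 with h | h
      · simp [h]
      · exact Polynomial.coeff_eq_zero_of_natDegree_lt (by omega)
    ext i
    rw [hp]
    by_cases h : 2 * i < N
    · rw [if_pos h]
      have h2 := congrArg (fun f => Polynomial.coeff f i) hq2
      simp only [Polynomial.coeff_sub, Polynomial.coeff_reflect] at h2
      rw [Polynomial.revAt_le (by omega : i ≤ N)] at h2
      rw [hqz (N - i) (by omega)] at h2
      omega
    · rw [if_neg h]
      exact hqz i h
end
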